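/- Let k be an algebraically closed field of characteristic zero and A, B ∈ k[[z]] of the same order n ≥ 2. Then G_A = G_B if and only if B = μ ∘ A for some μ ∈ k[[z]] of order 1. -/

import Mathlib

open PowerSeries

/-- Composition (substitution) `comp A B = A ∘ B` of formal power series,
the standard coefficient formula, well-behaved when `B` has zero constant term. -/
noncomputable def comp {k : Type*} [Field k] (A B : PowerSeries k) : PowerSeries k :=
  PowerSeries.mk fun n =>
    ∑ i ∈ Finset.range (n + 1), (PowerSeries.coeff (R := k) i A) * (PowerSeries.coeff (R := k) n (B ^ i))

/-- `iterComp φ j` is the `j`-fold compositional iterate `φ^{∘j}` (with `φ^{∘0} = z`). -/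
noncomputable def iterComp {k : Type*} [Field k] (φ : PowerSeries k) : ℕ → PowerSeries k
  | 0 => PowerSeries.X
  | n + 1 => comp φ (iterComp φ n)

/-- Composition of a list of power series: `compList [A₁, …, A_r] = A₁ ∘ ⋯ ∘ A_r`. -/
noncomputable def compList {k : Type*} [Field k] : List (PowerSeries k) → PowerSeries k
  | [] => PowerSeries.X
  | a :: t => comp a (compList t)

/-!
Write `A = w ^ n` with `w` of order one (an `n`-th root exists because `k` is algebraically closed
of characteristic zero) and let `ψ` be the compositional inverse of `w`. For every `n`-th root of
unity `ζ` the series `ψ ∘ (ζ w)` fixes `A`, hence fixes `B`, and therefore `S = B ∘ ψ` satisfies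
`S(ζ z) = S(z)`. Taking `ζ` primitive forces `S = μ(z ^ n)`, so `B = S ∘ w = μ ∘ w ^ n = μ ∘ A`,
and comparing orders gives `ord μ = 1`. Conversely `μ ∘ A` has the same transition group as `A`
because `μ` is invertible for composition.
-/

namespace PowerSeries

variable {k : Type*} [Field k]

theorem coeff_pow_eq_zero_of_lt {R : Type*} [CommRing R] {b : R⟦X⟧} (hb : constantCoeff b = 0)
    {m d : ℕ} (h : m < d) : coeff m (b ^ d) = 0 :=
  coeff_of_lt_order m <| (Nat.cast_lt.2 h).trans_le (le_order_pow_of_constantCoeff_eq_zero d hb)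

theorem comp_eq_subst (A : k⟦X⟧) {B : k⟦X⟧} (hB : constantCoeff B = 0) :
    comp A B = A.subst B := by
  ext m
  rw [comp, coeff_mk, coeff_subst' (.of_constantCoeff_zero' hB)]
  refine (finsum_eq_sum_of_support_subset _ fun d hd => ?_).symm
  rw [Function.mem_support] at hd
  rw [Finset.coe_range, Set.mem_Iio]
  by_contra! h
  exact hd (by rw [coeff_pow_eq_zero_of_lt hB (by omega), mul_zero])

theorem constantCoeff_subst_of_constantCoeff_eq_zero (f : k⟦X⟧) {g : k⟦X⟧}
    (hg : constantCoeff g = 0) : constantCoeff (f.subst g) = constantCoeff f := by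
  rw [← comp_eq_subst f hg, ← coeff_zero_eq_constantCoeff_apply, comp, coeff_mk]
  simp

theorem coeff_one_subst (f : k⟦X⟧) {g : k⟦X⟧} (hg : constantCoeff g = 0) :
    coeff 1 (f.subst g) = coeff 1 f * coeff 1 g := by
  rw [← comp_eq_subst f hg, comp, coeff_mk]
  simp [Finset.sum_range_succ, coeff_one]

theorem order_eq_one_iff {R : Type*} [Semiring R] {f : R⟦X⟧} :
    f.order = 1 ↔ constantCoeff f = 0 ∧ coeff 1 f ≠ 0 := by
  rw [← Nat.cast_one, order_eq_nat]
  simp only [Nat.lt_one_iff, forall_eq, coeff_zero_eq_constantCoeff_apply]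
  exact and_comm

theorem HasSubst.of_order_eq_one {R : Type*} [CommRing R] {f : R⟦X⟧} (hf : f.order = 1) :
    HasSubst f :=
  .of_constantCoeff_zero' (order_eq_one_iff.1 hf).1

theorem order_subst_eq_one {f g : k⟦X⟧} (hf : f.order = 1) (hg : g.order = 1) :
    order (f.subst g) = 1 := by
  obtain ⟨hf0, hf1⟩ := order_eq_one_iff.1 hf
  obtain ⟨hg0, hg1⟩ := order_eq_one_iff.1 hg
  rw [order_eq_one_iff, coeff_one_subst f hg0]
  exact ⟨constantCoeff_subst_eq_zero hg0 f hf0, mul_ne_zero hf1 hg1⟩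

theorem order_eq_one_of_subst_eq {n : ℕ} (hn : n ≠ 0) {μ A B : k⟦X⟧} (hA : A.order = n)
    (hB : B.order = n) (h : μ.subst A = B) : μ.order = 1 := by
  have hn' : (n : ℕ∞) ≠ 0 := Nat.cast_ne_zero.2 hn
  have hA0 : constantCoeff A = 0 := order_ne_zero_iff_constCoeff_eq_zero.1 (hA ▸ hn')
  have hμ0 : constantCoeff μ = 0 := by
    rw [← constantCoeff_subst_of_constantCoeff_eq_zero μ hA0, h]
    exact order_ne_zero_iff_constCoeff_eq_zero.1 (hB ▸ hn')
  have hle : A.order * μ.order ≤ B.order := by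
    simpa only [← order_eq_order, h] using le_order_subst _ (.of_constantCoeff_zero' hA0) μ
  rw [hA, hB, ← mul_one (n : ℕ∞), mul_assoc, one_mul,
    ENat.mul_le_mul_left_iff hn' (ENat.natCast_ne_top n)] at hle
  exact le_antisymm hle (Order.one_le_iff_ne_zero.2 (order_ne_zero_iff_constCoeff_eq_zero.2 hμ0))

theorem exists_subst_inverse {f : k⟦X⟧} (hf : f.order = 1) :
    ∃ g : k⟦X⟧, g.order = 1 ∧ f.subst g = X ∧ g.subst f = X := by
  obtain ⟨hf0, hf1⟩ := order_eq_one_iff.1 hf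
  refine ⟨f.substInvOfIsUnit hf1.isUnit, order_eq_one_iff.2 ⟨by simp, by simpa using hf1⟩,
    subst_substInvOfIsUnit_right f hf0 _, subst_substInvOfIsUnit_left f hf0 _⟩

theorem subst_left_cancel {μ f g : k⟦X⟧} (hμ : μ.order = 1) (hf : HasSubst f) (hg : HasSubst g)
    (h : μ.subst f = μ.subst g) : f = g := by
  obtain ⟨ν, -, -, hνμ⟩ := exists_subst_inverse hμ
  have hμ' := HasSubst.of_order_eq_one hμ
  calc f = subst f (ν.subst μ) := by rw [hνμ, subst_X hf]
    _ = subst g (ν.subst μ) := by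
      rw [subst_comp_subst_apply hμ' hf, subst_comp_subst_apply hμ' hg, h]
    _ = g := by rw [hνμ, subst_X hg]

theorem binomialSeries_pow {R A : Type*} [CommRing R] [BinomialRing R] [Ring A] [Algebra R A]
    (r : R) (n : ℕ) : binomialSeries A r ^ n = binomialSeries A (n * r) := by
  induction n with
  | zero => simp
  | succ n ih => rw [pow_succ, ih, ← binomialSeries_add, Nat.cast_succ, add_one_mul]

theorem exists_pow_eq_of_constantCoeff_eq_one [CharZero k] {n : ℕ} (hn : n ≠ 0) {V : k⟦X⟧}
    (hV : constantCoeff V = 1) : ∃ W : k⟦X⟧, W ^ n = V := by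
  have hV1 : HasSubst (V - 1) := .of_constantCoeff_zero' (by simp [hV])
  have h1 : binomialSeries k (1 : k) = 1 + X := by
    simpa using binomialSeries_nat (R := k) (A := k) 1
  refine ⟨(binomialSeries k (n : k)⁻¹).subst (V - 1), ?_⟩
  rw [← subst_pow hV1, binomialSeries_pow, mul_inv_cancel₀ (Nat.cast_ne_zero.2 hn), h1,
    subst_add hV1, subst_X hV1, ← map_one C, subst_C]
  simp

theorem exists_pow_eq_of_constantCoeff_ne_zero [IsAlgClosed k] [CharZero k] {n : ℕ} (hn : n ≠ 0)
    {U : k⟦X⟧} (hU : constantCoeff U ≠ 0) : ∃ W : k⟦X⟧, W ^ n = U := by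
  obtain ⟨d, hd⟩ := IsAlgClosed.exists_pow_nat_eq (constantCoeff U) (Nat.pos_of_ne_zero hn)
  obtain ⟨V, hV⟩ := exists_pow_eq_of_constantCoeff_eq_one hn
    (show constantCoeff (C (constantCoeff U)⁻¹ * U) = 1 by simp [hU])
  refine ⟨C d * V, ?_⟩
  rw [mul_pow, hV, ← map_pow, hd, ← mul_assoc, ← map_mul, mul_inv_cancel₀ hU, map_one, one_mul]

theorem exists_order_eq_one_pow_eq [IsAlgClosed k] [CharZero k] {n : ℕ} (hn : n ≠ 0)
    {A : k⟦X⟧} (hA : A.order = n) : ∃ w : k⟦X⟧, w.order = 1 ∧ w ^ n = A := by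
  obtain ⟨U, hAU⟩ : X ^ n ∣ A := by simpa [hA] using X_pow_order_dvd (φ := A)
  have hU : constantCoeff U ≠ 0 := by
    have := (order_eq_nat.1 hA).1
    rwa [hAU, coeff_X_pow_mul', if_pos le_rfl, Nat.sub_self, coeff_zero_eq_constantCoeff_apply]
      at this
  obtain ⟨W, hW⟩ := exists_pow_eq_of_constantCoeff_ne_zero hn hU
  refine ⟨X * W, order_eq_one_iff.2 ⟨by simp, ?_⟩, by rw [mul_pow, hW, hAU]⟩
  rw [← zero_add 1, coeff_succ_X_mul, coeff_zero_eq_constantCoeff_apply]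
  exact fun hW0 => hU (by rw [← hW, map_pow, hW0, zero_pow hn])

theorem exists_subst_X_pow_eq_of_rescale_eq {R : Type*} [CommRing R] [IsDomain R] {n : ℕ}
    (hn : n ≠ 0) {ζ : R} (hζ : IsPrimitiveRoot ζ n) {S : R⟦X⟧} (hS : rescale ζ S = S) :
    ∃ μ : R⟦X⟧, μ.subst (X ^ n) = S := by
  refine ⟨mk fun j => coeff (n * j) S, ?_⟩
  ext m
  rw [coeff_subst_X_pow hn]
  split_ifs with hm
  · rw [coeff_mk, Nat.mul_div_cancel' hm, Algebra.algebraMap_self, RingHom.id_apply]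
  · have hζm : ζ ^ m ≠ 1 := fun h => hm ((hζ.pow_eq_one_iff_dvd m).1 h)
    have := congrArg (coeff m) hS
    rw [coeff_rescale] at this
    exact (mul_left_eq_self₀.1 this).resolve_left hζm |>.symm

def transitionGroup (P : k⟦X⟧) : Set k⟦X⟧ := {φ | φ.order = 1 ∧ comp P φ = P}

theorem mem_transitionGroup {P φ : k⟦X⟧} :
    φ ∈ transitionGroup P ↔ φ.order = 1 ∧ P.subst φ = P := by
  refine and_congr_right fun hφ => ?_
  rw [comp_eq_subst P (order_eq_one_iff.1 hφ).1]

theorem transitionGroup_subst {μ A : k⟦X⟧} (hμ : μ.order = 1) (hA : constantCoeff A = 0) :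
    transitionGroup (μ.subst A) = transitionGroup A := by
  have hA' : HasSubst A := .of_constantCoeff_zero' hA
  ext φ
  simp only [mem_transitionGroup]
  refine and_congr_right fun hφ => ?_
  have hφ' := HasSubst.of_order_eq_one hφ
  rw [subst_comp_subst_apply hA' hφ']
  exact ⟨subst_left_cancel hμ (.of_constantCoeff_zero' (constantCoeff_subst_eq_zero
    (order_eq_one_iff.1 hφ).1 A hA)) hA', congrArg μ.subst⟩

theorem subst_smul_mem_transitionGroup_pow {n : ℕ} (hn : n ≠ 0) {w ψ : k⟦X⟧} (hw : w.order = 1)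
    (hψ : ψ.order = 1) (hwψ : w.subst ψ = X) {ζ : k} (hζ : ζ ^ n = 1) :
    ψ.subst (ζ • w) ∈ transitionGroup (w ^ n) := by
  have hζw : (ζ • w).order = 1 := by
    obtain ⟨hw0, hw1⟩ := order_eq_one_iff.1 hw
    refine order_eq_one_iff.2 ⟨by simp [hw0], ?_⟩
    rw [map_smul, smul_eq_mul]
    exact mul_ne_zero (ne_zero_pow hn (hζ ▸ one_ne_zero)) hw1
  have hφ := order_subst_eq_one hψ hζw
  rw [mem_transitionGroup, subst_pow (.of_order_eq_one hφ),
    ← subst_comp_subst_apply (.of_order_eq_one hψ) (.of_order_eq_one hζw), hwψ,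
    subst_X (.of_order_eq_one hζw), smul_pow, hζ, one_smul]
  exact ⟨hφ, rfl⟩

theorem rescale_subst_eq_of_transitionGroup_pow_subset {n : ℕ} (hn : n ≠ 0) {w ψ B : k⟦X⟧}
    (hw : w.order = 1) (hψ : ψ.order = 1) (hwψ : w.subst ψ = X) {ζ : k} (hζ : ζ ^ n = 1)
    (h : transitionGroup (w ^ n) ⊆ transitionGroup B) :
    rescale ζ (B.subst ψ) = B.subst ψ := by
  -- `ψ(ζ z) = φ(ψ)` for `φ = ψ(ζ w)`, and `φ` fixes `w ^ n`, hence fixes `B`.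
  have hφ := h (subst_smul_mem_transitionGroup_pow hn hw hψ hwψ hζ)
  rw [mem_transitionGroup] at hφ
  have hψ' := HasSubst.of_order_eq_one hψ
  have hψζX : ψ.subst (ζ • X) = subst ψ (ψ.subst (ζ • w)) := by
    rw [subst_comp_subst_apply (.smul' ζ (.of_order_eq_one hw)) hψ', subst_smul hψ', hwψ]
  rw [rescale_eq_subst, subst_comp_subst_apply hψ' (.smul_X' ζ), hψζX,
    ← subst_comp_subst_apply (.of_order_eq_one hφ.1) hψ', hφ.2]

theorem exists_subst_eq_of_transitionGroup_subset [IsAlgClosed k] [CharZero k] {n : ℕ}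
    (hn : n ≠ 0) {A B : k⟦X⟧} (hA : A.order = n) (h : transitionGroup A ⊆ transitionGroup B) :
    ∃ μ : k⟦X⟧, μ.subst A = B := by
  obtain ⟨w, hw, rfl⟩ := exists_order_eq_one_pow_eq hn hA
  obtain ⟨ψ, hψ, hwψ, hψw⟩ := exists_subst_inverse hw
  have : NeZero (n : k) := ⟨Nat.cast_ne_zero.2 hn⟩
  obtain ⟨ζ, hζ⟩ := HasEnoughRootsOfUnity.exists_primitiveRoot k n
  obtain ⟨μ, hμ⟩ := exists_subst_X_pow_eq_of_rescale_eq hn hζ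
    (rescale_subst_eq_of_transitionGroup_pow_subset hn hw hψ hwψ hζ.pow_eq_one h)
  have hw' := HasSubst.of_order_eq_one hw
  refine ⟨μ, ?_⟩
  calc subst (w ^ n) μ = subst w (μ.subst (X ^ n)) := by
        rw [subst_comp_subst_apply (HasSubst.X_pow (R := k) hn) hw', subst_pow hw', subst_X hw']
    _ = B := by
        rw [hμ, subst_comp_subst_apply (.of_order_eq_one hψ) hw', hψw, X_subst]

end PowerSeries

theorem stmt11 {k : Type*} [Field k] [IsAlgClosed k] [CharZero k]
    {n : ℕ} (hn : 2 ≤ n) (A B : PowerSeries k)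
    (hA : A.order = (n : ℕ∞)) (hB : B.order = (n : ℕ∞)) :
    {φ : PowerSeries k | φ.order = 1 ∧ comp A φ = A} =
      {φ : PowerSeries k | φ.order = 1 ∧ comp B φ = B} ↔
      ∃ μ : PowerSeries k, μ.order = 1 ∧ B = comp μ A := by
  have hn0 : n ≠ 0 := by omega
  have hA0 : constantCoeff A = 0 :=
    order_ne_zero_iff_constCoeff_eq_zero.1 (hA ▸ Nat.cast_ne_zero.2 hn0)
  change transitionGroup A = transitionGroup B ↔ _
  constructor
  · intro h
    obtain ⟨μ, hμ⟩ := exists_subst_eq_of_transitionGroup_subset hn0 hA h.le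
    exact ⟨μ, order_eq_one_of_subst_eq hn0 hA hB hμ, by rw [comp_eq_subst μ hA0, hμ]⟩
  · rintro ⟨μ, hμ, rfl⟩
    rw [comp_eq_subst μ hA0, transitionGroup_subst hμ hA0]
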